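/- arXiv:1602.00309 — 2 statements merged into one kernel-verified Lean document; each statement's English description precedes it below -/
import Mathlib

section
/- Let N ≥ 1, β ∈ (0,1), and ε ≥ 0. Let γ ∈ [0,1]^N and let γ̂ ∈ ℝ^N satisfy γ̂_i ≥ 0 for all i, γ̂ ≠ 0, and |γ̂_i − γ_i| ≤ ε for all i. Define the plug-in allocation m̂_i = γ̂_i^{1/(1-β)} / ∑_{j=1}^N γ̂_j^{1/(1-β)}. Then (∑_{i=1}^N γ_i^{1/(1-β)})^{1-β} − ∑_{i=1}^N γ_i m̂_i^β ≤ 2Nε. That is, allocating optimally for the estimated parameters γ̂ incurs instantaneous expected regret at most 2Nε under the true parameters γ. -/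
open Finset

/-!
Write `c = 1/(1-β)`, so that `1 - β = 1/c` and the optimal reward for `γ` is the `ℓ^c`-norm
of `γ`. The plug-in allocation attains the optimum for `γ̂`, namely `‖γ̂‖_c`. Since
`γ ≤ γ̂ + ε` coordinatewise, Minkowski's inequality gives `‖γ‖_c ≤ ‖γ̂‖_c + N^{1/c} ε`,
while replacing `γ̂` by `γ` against weights `m̂_i^β ∈ [0,1]` loses at most `N ε`.
-/

lemma natCast_rpow_le_self (n : ℕ) {q : ℝ} (hq₀ : 0 < q) (hq₁ : q ≤ 1) : (n : ℝ) ^ q ≤ n := by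
  rcases n.eq_zero_or_pos with rfl | hn
  · simp [Real.zero_rpow hq₀.ne']
  · exact Real.rpow_le_self_of_one_le (by exact_mod_cast hn) hq₁

section

variable {ι : Type*} [Fintype ι]

lemma div_sum_mem_Icc {z : ι → ℝ} (hz : ∀ i, 0 ≤ z i) (i : ι) :
    z i / ∑ j, z j ∈ Set.Icc 0 1 :=
  ⟨div_nonneg (hz i) (sum_nonneg fun j _ => hz j),
    div_le_one_of_le₀ (single_le_sum (fun j _ => hz j) (mem_univ i)) (sum_nonneg fun j _ => hz j)⟩

lemma sum_mul_le_sum_mul_add_card_mul {x y w : ι → ℝ} {ε : ℝ}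
    (hclose : ∀ i, |y i - x i| ≤ ε) (hw₀ : ∀ i, 0 ≤ w i) (hw₁ : ∀ i, w i ≤ 1) :
    ∑ i, y i * w i ≤ ∑ i, x i * w i + Fintype.card ι * ε := by
  have hterm (i : ι) : y i * w i ≤ x i * w i + ε :=
    calc y i * w i = x i * w i + (y i - x i) * w i := by ring
      _ ≤ x i * w i + |y i - x i| * 1 :=
        add_le_add_right (mul_le_mul (le_abs_self _) (hw₁ i) (hw₀ i) (abs_nonneg _)) _
      _ ≤ x i * w i + ε := by linarith [hclose i]
  calc ∑ i, y i * w i ≤ ∑ i, (x i * w i + ε) := sum_le_sum fun i _ => hterm i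
    _ = ∑ i, x i * w i + Fintype.card ι * ε := by simp [sum_add_distrib]

lemma rpow_sum_rpow_le_add_card_mul {p ε : ℝ} (hp : 1 ≤ p) (hε : 0 ≤ ε) {x y : ι → ℝ}
    (hx : ∀ i, 0 ≤ x i) (hy : ∀ i, 0 ≤ y i) (hxy : ∀ i, x i ≤ y i + ε) :
    (∑ i, x i ^ p) ^ (1 / p) ≤ (∑ i, y i ^ p) ^ (1 / p) + Fintype.card ι * ε := by
  have hp₀ : 0 < p := zero_lt_one.trans_le hp
  have hconst : (∑ _i : ι, ε ^ p) ^ (1 / p) ≤ Fintype.card ι * ε := by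
    rw [sum_const, card_univ, nsmul_eq_mul,
      Real.mul_rpow (Nat.cast_nonneg _) (Real.rpow_nonneg hε p), ← Real.rpow_mul hε,
      mul_one_div_cancel hp₀.ne', Real.rpow_one]
    gcongr
    exact natCast_rpow_le_self _ (by positivity) ((div_le_one hp₀).2 hp)
  calc (∑ i, x i ^ p) ^ (1 / p) ≤ (∑ i, (y i + ε) ^ p) ^ (1 / p) := by
        gcongr with i
        · exact sum_nonneg fun i _ => Real.rpow_nonneg (hx i) p
        · exact hx i
        · exact hxy i
    _ ≤ (∑ i, y i ^ p) ^ (1 / p) + (∑ _i : ι, ε ^ p) ^ (1 / p) :=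
        Real.Lp_add_le_of_nonneg univ hp (fun i _ => hy i) (fun _ _ => hε)
    _ ≤ (∑ i, y i ^ p) ^ (1 / p) + Fintype.card ι * ε := by gcongr

lemma sum_mul_rpow_div_sum_rpow_eq_rpow_sum {β : ℝ} (hβ : β < 1) {y : ι → ℝ} (hy : ∀ i, 0 ≤ y i) :
    ∑ i, y i * (y i ^ (1 / (1 - β)) / ∑ j, y j ^ (1 / (1 - β))) ^ β
      = (∑ j, y j ^ (1 / (1 - β))) ^ (1 - β) := by
  set c := 1 / (1 - β)
  set S := ∑ j, y j ^ c
  have h1β : 0 < 1 - β := by linarith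
  have hc : 1 + c * β = c := by simp only [c]; field_simp; ring
  have hc₀ : c ≠ 0 := by positivity
  have hS₀ : 0 ≤ S := sum_nonneg fun j _ => Real.rpow_nonneg (hy j) c
  rcases hS₀.eq_or_lt with hS | hS
  · have hy₀ : ∀ i, y i = 0 := fun i =>
      (Real.rpow_eq_zero (hy i) hc₀).1 ((sum_eq_zero_iff_of_nonneg fun j _ =>
        Real.rpow_nonneg (hy j) c).1 hS.symm i (mem_univ i))
    simp [hy₀, ← hS, Real.zero_rpow h1β.ne']
  have hterm : ∀ i, y i * (y i ^ c / S) ^ β = y i ^ c / S ^ β := fun i => by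
    rw [Real.div_rpow (Real.rpow_nonneg (hy i) c) hS.le, ← Real.rpow_mul (hy i), mul_div_assoc',
      ← Real.rpow_one_add' (hy i) (by rw [hc]; exact hc₀), hc]
  rw [sum_congr rfl fun i _ => hterm i, ← sum_div, Real.rpow_sub hS, Real.rpow_one]

end

theorem stmt12_general (N : ℕ) (β : ℝ) (hβ : β ∈ Set.Ioo (0 : ℝ) 1)
    (ε : ℝ) (hε : 0 ≤ ε)
    (γ : Fin N → ℝ) (hγ : ∀ i, γ i ∈ Set.Icc (0 : ℝ) 1)
    (γhat : Fin N → ℝ) (hγhat0 : ∀ i, 0 ≤ γhat i)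
    (hclose : ∀ i, |γhat i - γ i| ≤ ε)
    (mhat : Fin N → ℝ)
    (hmhat : ∀ i, mhat i = γhat i ^ (1 / (1 - β)) / ∑ j, γhat j ^ (1 / (1 - β))) :
    (∑ i, γ i ^ (1 / (1 - β))) ^ (1 - β) - ∑ i, γ i * mhat i ^ β
      ≤ 2 * N * ε := by
  obtain ⟨hβ₀, hβ₁⟩ := hβ
  have hc : 1 ≤ 1 / (1 - β) := by rw [le_div_iff₀ (by linarith)]; linarith
  have hm : ∀ i, mhat i ∈ Set.Icc 0 1 := fun i =>
    hmhat i ▸ div_sum_mem_Icc (fun j => Real.rpow_nonneg (hγhat0 j) _) i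
  have hopt := rpow_sum_rpow_le_add_card_mul hc hε (fun i => (hγ i).1) hγhat0
    fun i => by linarith [(abs_le.1 (hclose i)).1]
  have hloss := sum_mul_le_sum_mul_add_card_mul hclose (fun i => Real.rpow_nonneg (hm i).1 β)
    fun i => Real.rpow_le_one (hm i).1 (hm i).2 hβ₀.le
  have hplug := sum_mul_rpow_div_sum_rpow_eq_rpow_sum hβ₁ hγhat0
  simp only [one_div_one_div, Fintype.card_fin, ← hmhat] at hopt hloss hplug
  linarith

/-- Estimation-error-to-regret bound: if `|γ̂_i − γ_i| ≤ ε` for all `i`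
(`γ ∈ [0,1]^N`, `γ̂ ≥ 0`, `γ̂ ≠ 0`, `β ∈ (0,1)`), then allocating optimally
for `γ̂` via `m̂_i = γ̂_i^{1/(1-β)} / ∑_j γ̂_j^{1/(1-β)}` incurs instantaneous
expected regret at most `2Nε` under the true parameters `γ`. -/
theorem stmt12 (N : ℕ) (hN : 1 ≤ N) (β : ℝ) (hβ : β ∈ Set.Ioo (0 : ℝ) 1)
    (ε : ℝ) (hε : 0 ≤ ε)
    (γ : Fin N → ℝ) (hγ : ∀ i, γ i ∈ Set.Icc (0 : ℝ) 1)
    (γhat : Fin N → ℝ) (hγhat0 : ∀ i, 0 ≤ γhat i) (hγhatne : γhat ≠ 0)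
    (hclose : ∀ i, |γhat i - γ i| ≤ ε)
    (mhat : Fin N → ℝ)
    (hmhat : ∀ i, mhat i = γhat i ^ (1 / (1 - β)) / ∑ j, γhat j ^ (1 / (1 - β))) :
    (∑ i, γ i ^ (1 / (1 - β))) ^ (1 - β) - ∑ i, γ i * mhat i ^ β
      ≤ 2 * N * ε :=
  stmt12_general N β hβ ε hε γ hγ γhat hγhat0 hclose mhat hmhat
end

section
/- Consider the FETE algorithm with N ≥ 1 threads, shared exponent β ∈ (0,1), true parameters γ ∈ [0,1]^N with γ ≠ 0, horizon T, and exploration fraction ξ ∈ (0,1) such that ξT is a positive integer. During rounds t = 1, …, ξT every thread receives allocation 1/N and thread i's rewards s_{t,i} ∈ [0,1] are independent with E[s_{t,i}] = γ_i (1/N)^β; at time ξT the estimate γ̂_i = N^β·(1/(ξT))·∑_{t=1}^{ξT} s_{t,i} is formed, and during rounds t = ξT+1, …, T the plug-in allocation m̂_i = γ̂_i^{1/(1-β)}/∑_j γ̂_j^{1/(1-β)} is used (whenever γ̂ ≠ 0, γ̂_i ≥ 0). Then for any δ ∈ (0,1), with probability at least 1 − Nδ, the cumulative expected regret R = ∑_{t=1}^T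 (‖γ‖_{1/(1-β)} − ρ(γ, m_t)) satisfies R ≤ ξTN + √2 · N^{1+β} · (1/√ξ) · √T · √(ln(2/δ)). -/
open Finset MeasureTheory
open scoped ProbabilityTheory

/-!
During exploration a round loses at most the optimum `‖γ‖_{1/(1-β)} ≤ N`. Hoeffding's inequality
for each thread and a union bound give, with probability at least `1 - Nδ`, estimates with
`|γ̂ᵢ - γᵢ| ≤ ε = N^β √(log (2/δ) / (2 t0))` for all `i`. On that event the plug-in allocation,
being optimal for `γ̂`, loses at most `2Nε` per round: replacing `γ̂` by `γ` moves its reward by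
at most `Nε`, and moves the optimum by at most `Nε` by Minkowski's inequality.
-/

open Real ProbabilityTheory

lemma natCast_rpow_le_self_s13 (n : ℕ) {p : ℝ} (hp0 : 0 < p) (hp1 : p ≤ 1) : (n : ℝ) ^ p ≤ n := by
  rcases n.eq_zero_or_pos with rfl | hn
  · simp [zero_rpow hp0.ne']
  · exact rpow_le_self_of_one_le (by exact_mod_cast hn) hp1

noncomputable section Allocation

variable {ι : Type*} [Fintype ι] (β : ℝ)

def reward (γ m : ι → ℝ) : ℝ := ∑ i, γ i * m i ^ β

def optReward (γ : ι → ℝ) : ℝ := (∑ i, γ i ^ (1 / (1 - β))) ^ (1 - β)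

def regret (γ m : ι → ℝ) : ℝ := optReward β γ - reward β γ m

def plugIn (g : ι → ℝ) (i : ι) : ℝ := g i ^ (1 / (1 - β)) / ∑ j, g j ^ (1 / (1 - β))

variable {β} {γ g : ι → ℝ} {ε : ℝ}

lemma plugIn_nonneg (hg : 0 ≤ g) (i : ι) : 0 ≤ plugIn β g i :=
  div_nonneg (rpow_nonneg (hg i) _) (sum_nonneg fun j _ => rpow_nonneg (hg j) _)

lemma plugIn_le_one (hg : 0 ≤ g) (i : ι) : plugIn β g i ≤ 1 :=
  div_le_one_of_le₀ (single_le_sum (fun j _ => rpow_nonneg (hg j) _) (mem_univ i))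
    (sum_nonneg fun j _ => rpow_nonneg (hg j) _)

lemma reward_plugIn (hβ : β < 1) (hg : 0 ≤ g) : reward β g (plugIn β g) = optReward β g := by
  have h1β : 1 - β ≠ 0 := by linarith
  unfold reward plugIn optReward
  set q := 1 / (1 - β)
  set S := ∑ j, g j ^ q
  have hS : 0 ≤ S := sum_nonneg fun j _ => rpow_nonneg (hg j) _
  -- with `q = 1/(1-β)`, `1 + qβ = q` turns each term `gᵢ mᵢ^β` into `gᵢ^q / S^β`
  have hq : 1 + q * β = q := by simp only [q]; field_simp; ring
  have hterm : ∀ i, g i * (g i ^ q / S) ^ β = g i ^ q / S ^ β := fun i => by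
    rw [div_rpow (rpow_nonneg (hg i) q) hS, ← rpow_mul (hg i), mul_div_assoc',
      ← rpow_one_add' (hg i) (by rw [hq]; positivity), hq]
  rw [sum_congr rfl fun i _ => hterm i, ← sum_div, rpow_sub' hS h1β, rpow_one]

lemma reward_sub_reward_le {m : ι → ℝ} (hβ : 0 ≤ β) (hm0 : 0 ≤ m) (hm1 : m ≤ 1) (hε : 0 ≤ ε)
    (hgγ : ∀ i, g i - γ i ≤ ε) : reward β g m - reward β γ m ≤ Fintype.card ι * ε := by
  calc reward β g m - reward β γ m = ∑ i, (g i - γ i) * m i ^ β := by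
        simp only [reward, ← sum_sub_distrib, sub_mul]
    _ ≤ ∑ _i : ι, ε := sum_le_sum fun i _ => ?_
    _ = Fintype.card ι * ε := by simp
  calc (g i - γ i) * m i ^ β ≤ ε * m i ^ β :=
        mul_le_mul_of_nonneg_right (hgγ i) (rpow_nonneg (hm0 i) β)
    _ ≤ ε := mul_le_of_le_one_right hε (rpow_le_one (hm0 i) (hm1 i) hβ)

lemma optReward_le_optReward_add (hβ : β ∈ Set.Ico 0 1) (hγ : 0 ≤ γ) (hg : 0 ≤ g) (hε : 0 ≤ ε)
    (hγg : ∀ i, γ i - g i ≤ ε) :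
    optReward β γ ≤ optReward β g + (Fintype.card ι : ℝ) ^ (1 - β) * ε := by
  obtain ⟨hβ0, hβ1⟩ := hβ
  have h1β : 0 < 1 - β := by linarith
  set q := 1 / (1 - β)
  have hq : 1 ≤ q := by rw [le_div_iff₀ h1β]; linarith
  have hεq : ((∑ _i : ι, ε ^ q) ^ (1 / q)) = (Fintype.card ι : ℝ) ^ (1 - β) * ε := by
    rw [sum_const, card_univ, nsmul_eq_mul, one_div_one_div,
      mul_rpow (Nat.cast_nonneg _) (rpow_nonneg hε q), ← rpow_mul hε,
      one_div_mul_cancel h1β.ne', rpow_one]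
  calc optReward β γ ≤ (∑ i, (g i + ε) ^ q) ^ (1 / q) := by
        rw [optReward, one_div_one_div]
        exact rpow_le_rpow (sum_nonneg fun i _ => rpow_nonneg (hγ i) q)
          (sum_le_sum fun i _ => rpow_le_rpow (hγ i) (by linarith [hγg i]) (by positivity))
          h1β.le
    _ ≤ (∑ i, g i ^ q) ^ (1 / q) + (∑ _i : ι, ε ^ q) ^ (1 / q) :=
        Lp_add_le_of_nonneg _ hq (fun i _ => hg i) (fun _ _ => hε)
    _ = optReward β g + (Fintype.card ι : ℝ) ^ (1 - β) * ε := by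
        rw [hεq, optReward, one_div_one_div]

lemma optReward_le_card (hβ : β ∈ Set.Ico 0 1) (hγ0 : 0 ≤ γ) (hγ1 : γ ≤ 1) :
    optReward β γ ≤ Fintype.card ι := by
  have h1β : 0 < 1 - β := by linarith [hβ.2]
  calc optReward β γ ≤ (∑ _i : ι, (1 : ℝ)) ^ (1 - β) := by
        rw [optReward]
        gcongr with i
        · exact sum_nonneg fun i _ => rpow_nonneg (hγ0 i) _
        · exact rpow_le_one (hγ0 i) (hγ1 i) (by positivity)
    _ ≤ Fintype.card ι := by
        simpa using natCast_rpow_le_self_s13 (Fintype.card ι) h1β (by linarith [hβ.1])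

lemma regret_le_card {m : ι → ℝ} (hβ : β ∈ Set.Ico 0 1) (hγ0 : 0 ≤ γ) (hγ1 : γ ≤ 1)
    (hm : 0 ≤ m) : regret β γ m ≤ Fintype.card ι := by
  have hreward : 0 ≤ reward β γ m :=
    sum_nonneg fun i _ => mul_nonneg (hγ0 i) (rpow_nonneg (hm i) β)
  unfold regret
  linarith [optReward_le_card hβ hγ0 hγ1]

lemma regret_plugIn_le (hβ : β ∈ Set.Ico 0 1) (hγ : 0 ≤ γ) (hg : 0 ≤ g) (hε : 0 ≤ ε)
    (hgγ : ∀ i, |g i - γ i| ≤ ε) : regret β γ (plugIn β g) ≤ 2 * Fintype.card ι * ε := by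
  have hopt := optReward_le_optReward_add hβ hγ hg hε fun i => (abs_sub_le_iff.1 (hgγ i)).2
  have hreward := reward_sub_reward_le hβ.1 (plugIn_nonneg (β := β) hg) (plugIn_le_one hg) hε
    fun i => (abs_sub_le_iff.1 (hgγ i)).1
  have hcard : (Fintype.card ι : ℝ) ^ (1 - β) ≤ Fintype.card ι :=
    natCast_rpow_le_self_s13 _ (by linarith [hβ.2]) (by linarith [hβ.1])
  rw [reward_plugIn hβ.2 hg] at hreward
  rw [regret]
  linarith [mul_le_mul_of_nonneg_right hcard hε]

lemma exploreThenExploit_regret_le {m : ι → ℝ} {t0 T : ℝ} (hβ : β ∈ Set.Ico 0 1) (hγ0 : 0 ≤ γ)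
    (hγ1 : γ ≤ 1) (hm : 0 ≤ m) (hg : 0 ≤ g) (hε : 0 ≤ ε) (hgγ : ∀ i, |g i - γ i| ≤ ε)
    (ht0 : 0 ≤ t0) (ht0T : t0 ≤ T) :
    t0 * regret β γ m + (T - t0) * regret β γ (plugIn β g) ≤
      t0 * Fintype.card ι + T * (2 * Fintype.card ι * ε) := by
  have hexplore := regret_le_card hβ hγ0 hγ1 hm
  have hexploit := regret_plugIn_le hβ hγ0 hg hε hgγ
  linarith [mul_le_mul_of_nonneg_left hexplore ht0,
    mul_le_mul_of_nonneg_left hexploit (sub_nonneg.2 ht0T),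
    mul_nonneg ht0 (by positivity : (0 : ℝ) ≤ 2 * Fintype.card ι * ε)]

end Allocation

namespace ProbabilityTheory

variable {Ω : Type*} [MeasurableSpace Ω] {μ : Measure Ω} [IsProbabilityMeasure μ]

lemma one_sub_sum_measureReal_le_compl_iUnion {ι : Type*} [Fintype ι] (B : ι → Set Ω) :
    1 - ∑ i, μ.real (B i) ≤ μ.real (⋃ i, B i)ᶜ := by
  have hcover := measureReal_union_le (μ := μ) (⋃ i, B i) (⋃ i, B i)ᶜ
  rw [Set.union_compl_self, probReal_univ] at hcover
  linarith [measureReal_iUnion_fintype_le (μ := μ) B]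

lemma measureReal_le_abs_sum_sub_integral_le {ι : Type*} {X : ι → Ω → ℝ}
    (hindep : iIndepFun X μ) (hmeas : ∀ i, Measurable (X i))
    (hX : ∀ i, ∀ᵐ ω ∂μ, X i ω ∈ Set.Icc (0 : ℝ) 1) (s : Finset ι) {a : ℝ} (ha : 0 ≤ a) :
    μ.real {ω | a ≤ |∑ i ∈ s, (X i ω - μ[X i])|} ≤ 2 * exp (-2 * a ^ 2 / #s) := by
  have hsubG : ∀ i ∈ s, HasSubgaussianMGF (fun ω => X i ω - μ[X i]) (1 / 4) μ := fun i _ => by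
    convert hasSubgaussianMGF_of_mem_Icc (hmeas i).aemeasurable (hX i) using 1
    norm_num
  have hcentered : iIndepFun (fun i ω => X i ω - μ[X i]) μ :=
    hindep.comp (fun i (x : ℝ) => x - ∫ ω, X i ω ∂μ) fun i => by fun_prop
  have htail : ∀ Y : ι → Ω → ℝ, iIndepFun Y μ → (∀ i ∈ s, HasSubgaussianMGF (Y i) (1 / 4) μ) →
      μ.real {ω | a ≤ ∑ i ∈ s, Y i ω} ≤ exp (-2 * a ^ 2 / #s) := fun Y hY hYs => by
    refine (HasSubgaussianMGF.measure_sum_ge_le_of_iIndepFun hY hYs ha).trans_eq ?_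
    push_cast
    simp only [sum_const, nsmul_eq_mul]
    field_simp
    ring_nf
  calc μ.real {ω | a ≤ |∑ i ∈ s, (X i ω - μ[X i])|}
      ≤ μ.real ({ω | a ≤ ∑ i ∈ s, (X i ω - μ[X i])} ∪
          {ω | a ≤ ∑ i ∈ s, -(X i ω - μ[X i])}) := by
        refine measureReal_mono (fun ω hω => ?_)
        simpa only [Set.mem_union, Set.mem_ofPred_eq, sum_neg_distrib] using le_abs.1 hω
    _ ≤ exp (-2 * a ^ 2 / #s) + exp (-2 * a ^ 2 / #s) :=
        (measureReal_union_le _ _).trans <| add_le_add (htail _ hcentered hsubG)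
          (htail _ (hcentered.comp (fun _ x => -x) fun _ => measurable_neg)
            fun i hi => (hsubG i hi).neg)
    _ = 2 * exp (-2 * a ^ 2 / #s) := by ring

lemma measureReal_lt_abs_mean_sub_le {n : ℕ} (hn : 0 < n) {X : Fin n → Ω → ℝ}
    (hindep : iIndepFun X μ) (hmeas : ∀ t, Measurable (X t))
    (hX : ∀ t, ∀ᵐ ω ∂μ, X t ω ∈ Set.Icc (0 : ℝ) 1) {c : ℝ} (hc : ∀ t, μ[X t] = c)
    {δ : ℝ} (hδ0 : 0 < δ) (hδ2 : δ ≤ 2) :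
    μ.real {ω | √(log (2 / δ) / (2 * n)) < |(1 / n) * ∑ t, X t ω - c|} ≤ δ := by
  have hn' : (0 : ℝ) < n := by exact_mod_cast hn
  have hlog : 0 ≤ log (2 / δ) := log_nonneg (by rw [le_div_iff₀ hδ0]; linarith)
  set w := √(log (2 / δ) / (2 * n))
  have hmean : ∀ ω, (1 / n) * ∑ t, X t ω - c = (1 / n) * ∑ t, (X t ω - μ[X t]) := fun ω => by
    simp only [hc, sum_sub_distrib, sum_const, card_univ, Fintype.card_fin, nsmul_eq_mul]
    field_simp
  have hsub : {ω | w < |(1 / n) * ∑ t, X t ω - c|} ⊆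
      {ω | n * w ≤ |∑ t, (X t ω - μ[X t])|} := fun ω hω => by
    simp only [Set.mem_ofPred_eq, hmean, abs_mul, abs_of_pos (one_div_pos.2 hn')] at hω ⊢
    rw [one_div, inv_mul_eq_div, lt_div_iff₀ hn'] at hω
    linarith
  calc μ.real {ω | w < |(1 / n) * ∑ t, X t ω - c|}
      ≤ 2 * exp (-2 * (n * w) ^ 2 / #(univ : Finset (Fin n))) :=
        (measureReal_mono hsub).trans
          (measureReal_le_abs_sum_sub_integral_le hindep hmeas hX univ (by positivity))
    _ = δ := by
        rw [card_univ, Fintype.card_fin, mul_pow, sq_sqrt (by positivity)]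
        rw [show -2 * (n ^ 2 * (log (2 / δ) / (2 * n))) / n = -log (2 / δ) by field_simp,
          exp_neg, exp_log (by positivity)]
        field_simp

end ProbabilityTheory

lemma mul_two_mul_rpow_mul_sqrt_eq {N T ξ L : ℝ} (β : ℝ) (hN : 0 < N) (hT : 0 < T) (hξ : 0 < ξ) :
    T * (2 * N * (N ^ β * √(L / (2 * (ξ * T))))) =
      √2 * N ^ (1 + β) * (1 / √ξ) * √T * √L := by
  rw [sqrt_div' _ (by positivity), sqrt_mul zero_le_two, sqrt_mul hξ.le, rpow_add hN, rpow_one]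
  have : 0 < √ξ := sqrt_pos.2 hξ
  have : 0 < √T := sqrt_pos.2 hT
  field_simp
  rw [sq_sqrt zero_le_two, sq_sqrt hT.le]
  ring

lemma measureReal_lt_abs_rpow_mul_mean_sub_le {Ω : Type*} [MeasurableSpace Ω] {μ : Measure Ω}
    [IsProbabilityMeasure μ] {n : ℕ} (hn : 0 < n) {X : Fin n → Ω → ℝ} (hindep : iIndepFun X μ)
    (hmeas : ∀ t, Measurable (X t)) (hX : ∀ t, ∀ᵐ ω ∂μ, X t ω ∈ Set.Icc (0 : ℝ) 1)
    {N β γ : ℝ} (hN : 0 < N) (hc : ∀ t, μ[X t] = γ * (1 / N) ^ β)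
    {δ : ℝ} (hδ0 : 0 < δ) (hδ2 : δ ≤ 2) :
    μ.real {ω | N ^ β * √(log (2 / δ) / (2 * n)) < |N ^ β * (1 / n) * ∑ t, X t ω - γ|} ≤ δ := by
  have hNβ : N ^ β * (1 / N) ^ β = 1 := by
    rw [← mul_rpow hN.le (by positivity), mul_one_div_cancel hN.ne', one_rpow]
  refine le_trans (measureReal_mono fun ω hω => ?_) <|
    measureReal_lt_abs_mean_sub_le hn hindep hmeas hX hc hδ0 hδ2
  have hdev : N ^ β * (1 / n) * ∑ t, X t ω - γ =
      N ^ β * ((1 / n) * ∑ t, X t ω - γ * (1 / N) ^ β) := by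
    linear_combination γ * hNβ
  rwa [Set.mem_ofPred_eq, hdev, abs_mul, abs_of_pos (by positivity),
    mul_lt_mul_iff_right₀ (by positivity)] at hω

theorem stmt13_general {Ω : Type*} [MeasureSpace Ω] [IsProbabilityMeasure (ℙ : Measure Ω)]
    (N : ℕ) (hN : 1 ≤ N) (β : ℝ) (hβ : β ∈ Set.Ioo (0 : ℝ) 1)
    (γ : Fin N → ℝ) (hγ : ∀ i, γ i ∈ Set.Icc (0 : ℝ) 1)
    (T t0 : ℕ) (ξ : ℝ) (hξ : ξ ∈ Set.Ioo (0 : ℝ) 1)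
    (ht0 : 0 < t0) (ht0T : (t0 : ℝ) = ξ * T)
    (s : Fin t0 → Fin N → Ω → ℝ)
    (hmeas : ∀ t i, Measurable (s t i))
    (hindep : ProbabilityTheory.iIndepFun
      (fun p : Fin t0 × Fin N => s p.1 p.2) ℙ)
    (hbdd : ∀ t i, ∀ᵐ ω, s t i ω ∈ Set.Icc (0 : ℝ) 1)
    (hmean : ∀ t i, (∫ ω, s t i ω) = γ i * ((1 : ℝ) / N) ^ β)
    (γhat : Fin N → Ω → ℝ)
    (hγhat : ∀ i ω, γhat i ω = (N : ℝ) ^ β * ((1 : ℝ) / t0) * ∑ t, s t i ω)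
    (mhat : Ω → Fin N → ℝ)
    (hmhat : ∀ ω i, mhat ω i = γhat i ω ^ (1 / (1 - β)) / ∑ j, γhat j ω ^ (1 / (1 - β)))
    (R : Ω → ℝ)
    (hR : ∀ ω, R ω =
        (t0 : ℝ) * ((∑ i, γ i ^ (1 / (1 - β))) ^ (1 - β) - ∑ i, γ i * ((1 : ℝ) / N) ^ β)
        + ((T : ℝ) - t0) *
          ((∑ i, γ i ^ (1 / (1 - β))) ^ (1 - β) - ∑ i, γ i * (mhat ω i) ^ β))
    (δ : ℝ) (hδ : δ ∈ Set.Ioo (0 : ℝ) 1) :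
    1 - N * δ ≤
      (ℙ {ω | R ω ≤ ξ * T * N +
        Real.sqrt 2 * (N : ℝ) ^ (1 + β) * (1 / Real.sqrt ξ) * Real.sqrt T *
          Real.sqrt (Real.log (2 / δ))}).toReal := by
  obtain ⟨hδ0, hδ1⟩ := hδ
  have hβ' : β ∈ Set.Ico 0 1 := Set.Ioo_subset_Ico_self hβ
  have hNpos : (0 : ℝ) < N := by exact_mod_cast hN
  have ht0pos : (0 : ℝ) < t0 := by exact_mod_cast ht0
  have ht0T' : (t0 : ℝ) ≤ T := by rw [ht0T]; nlinarith [hξ.2, (T.cast_nonneg : (0 : ℝ) ≤ T)]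
  set ε := (N : ℝ) ^ β * √(log (2 / δ) / (2 * t0))
  have hbad : ∀ i, (ℙ : Measure Ω).real {ω | ε < |γhat i ω - γ i|} ≤ δ := fun i => by
    simp_rw [hγhat]
    exact measureReal_lt_abs_rpow_mul_mean_sub_le ht0
      (hindep.precomp (g := fun t => (t, i)) fun _ _ h => (Prod.ext_iff.1 h).1)
      (hmeas · i) (hbdd · i) hNpos (hmean · i) hδ0 (by linarith)
  have hgood : ∀ᵐ ω, ω ∈ (⋃ i, {ω | ε < |γhat i ω - γ i|})ᶜ → R ω ≤ ξ * T * N +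
      √2 * (N : ℝ) ^ (1 + β) * (1 / √ξ) * √T * √(log (2 / δ)) := by
    filter_upwards [ae_all_iff.2 fun t => ae_all_iff.2 (hbdd t)] with ω hs hω
    have hγhat0 : 0 ≤ fun i => γhat i ω := fun i => show 0 ≤ γhat i ω from (hγhat i ω).symm ▸
      mul_nonneg (by positivity) (sum_nonneg fun t _ => (hs t i).1)
    have hregret := exploreThenExploit_regret_le (m := fun _ => 1 / (N : ℝ)) (ε := ε) hβ'
      (fun i => (hγ i).1) (fun i => (hγ i).2) (fun _ => by positivity) hγhat0 (by positivity)
      (by simpa using hω) ht0pos.le ht0T'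
    rw [Fintype.card_fin] at hregret
    rw [← mul_two_mul_rpow_mul_sqrt_eq β hNpos (by linarith) hξ.1, ← ht0T, hR ω,
      show mhat ω = _ from funext (hmhat ω)]
    exact hregret
  calc 1 - N * δ ≤ 1 - ∑ i, (ℙ : Measure Ω).real {ω | ε < |γhat i ω - γ i|} := by
        linarith [sum_le_sum fun i (_ : i ∈ univ) => hbad i, show ∑ _i : Fin N, δ = N * δ by simp]
    _ ≤ (ℙ : Measure Ω).real (⋃ i, {ω | ε < |γhat i ω - γ i|})ᶜ :=
        one_sub_sum_measureReal_le_compl_iUnion _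
    _ ≤ _ := ENNReal.toReal_mono (measure_ne_top _ _) (measure_mono_ae hgood)

/-- Theorem 1 of the paper (regret of the FETE algorithm): with `N` threads,
shared exponent `β ∈ (0,1)`, true parameters `γ ∈ [0,1]^N`, `γ ≠ 0`, horizon
`T`, exploration fraction `ξ ∈ (0,1)` with `ξT = t0` a positive integer,
uniform allocation `1/N` and independent rewards `s_{t,i} ∈ [0,1]` with mean
`γ_i (1/N)^β` during exploration, estimates
`γ̂_i = N^β (1/t0) ∑_t s_{t,i}` and plug-in allocation
`m̂_i = γ̂_i^{1/(1-β)}/∑_j γ̂_j^{1/(1-β)}` during exploitation, the cumulative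
expected regret `R = ∑_{t=1}^T (‖γ‖_{1/(1-β)} − ρ(γ, m_t))` satisfies, with
probability at least `1 − Nδ`,
`R ≤ ξTN + √2 · N^{1+β} · ξ^{-1/2} · √T · √(ln(2/δ))`. -/
theorem stmt13 {Ω : Type*} [MeasureSpace Ω] [IsProbabilityMeasure (ℙ : Measure Ω)]
    (N : ℕ) (hN : 1 ≤ N) (β : ℝ) (hβ : β ∈ Set.Ioo (0 : ℝ) 1)
    (γ : Fin N → ℝ) (hγ : ∀ i, γ i ∈ Set.Icc (0 : ℝ) 1) (hγne : γ ≠ 0)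
    (T t0 : ℕ) (ξ : ℝ) (hξ : ξ ∈ Set.Ioo (0 : ℝ) 1)
    (ht0 : 0 < t0) (ht0T : (t0 : ℝ) = ξ * T)
    (s : Fin t0 → Fin N → Ω → ℝ)
    (hmeas : ∀ t i, Measurable (s t i))
    (hindep : ProbabilityTheory.iIndepFun
      (fun p : Fin t0 × Fin N => s p.1 p.2) ℙ)
    (hbdd : ∀ t i, ∀ᵐ ω, s t i ω ∈ Set.Icc (0 : ℝ) 1)
    (hmean : ∀ t i, (∫ ω, s t i ω) = γ i * ((1 : ℝ) / N) ^ β)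
    (γhat : Fin N → Ω → ℝ)
    (hγhat : ∀ i ω, γhat i ω = (N : ℝ) ^ β * ((1 : ℝ) / t0) * ∑ t, s t i ω)
    (mhat : Ω → Fin N → ℝ)
    (hmhat : ∀ ω i, mhat ω i = γhat i ω ^ (1 / (1 - β)) / ∑ j, γhat j ω ^ (1 / (1 - β)))
    (R : Ω → ℝ)
    (hR : ∀ ω, R ω =
        (t0 : ℝ) * ((∑ i, γ i ^ (1 / (1 - β))) ^ (1 - β) - ∑ i, γ i * ((1 : ℝ) / N) ^ β)
        + ((T : ℝ) - t0) *
          ((∑ i, γ i ^ (1 / (1 - β))) ^ (1 - β) - ∑ i, γ i * (mhat ω i) ^ β))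
    (δ : ℝ) (hδ : δ ∈ Set.Ioo (0 : ℝ) 1) :
    1 - N * δ ≤
      (ℙ {ω | R ω ≤ ξ * T * N +
        Real.sqrt 2 * (N : ℝ) ^ (1 + β) * (1 / Real.sqrt ξ) * Real.sqrt T *
          Real.sqrt (Real.log (2 / δ))}).toReal :=
  stmt13_general N hN β hβ γ hγ T t0 ξ hξ ht0 ht0T s hmeas hindep hbdd hmean γhat hγhat mhat hmhat R
    hR δ hδ
end
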